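/- Let S ⊆ ℤ^m be a vector semigroup and O = rint(cone(S)). Then every rational point of O belongs to S* = ⋃_{n≥1} S/n; that is, O ∩ ℚ^m ⊆ S*. -/

import Mathlib

open Set Filter Topology MeasureTheory ProbabilityTheory Pointwise

noncomputable section

/-- Coercion of an integer vector to a real vector. -/
def zc {m : ℕ} (x : Fin m → ℤ) : Fin m → ℝ := fun i => (x i : ℝ)

/-- Convex conical hull: all finite nonnegative real combinations of elements of `A`. -/
def coneHull {m : ℕ} (A : Set (Fin m → ℝ)) : Set (Fin m → ℝ) :=
  { x | ∃ (s : Finset (Fin m → ℝ)) (w : (Fin m → ℝ) → ℝ),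
      ↑s ⊆ A ∧ (∀ a ∈ s, 0 ≤ w a) ∧ x = ∑ a ∈ s, w a • a }

/-- `S* = ⋃_{n ≥ 1} S/n`, viewed inside `ℝ^m`. -/
def Sstar {m : ℕ} (S : Set (Fin m → ℤ)) : Set (Fin m → ℝ) :=
  {x | ∃ n : ℕ, 0 < n ∧ ∃ s ∈ S, (n : ℝ) • x = zc s}

/-!
Pick `s ∈ S`. As `x` lies in the relative interior of `cone(S)`, the point `y = x + (x - s) / k`
still lies in `cone(S)` for some `k ≥ 1`, and `y` is rational. A rational point of a cone spanned
by integer vectors is a nonnegative *rational* combination of them: a rational point of the real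
span lies in the rational span (a rational functional vanishing on the generators but not on `y`
would contradict the real representation), and a Carathéodory-type exchange along the difference
of a real and a rational representation removes generators until the rational one is nonnegative.
Clearing denominators, `N y` is a sum of elements of `S` for some `N ≥ 1`, so
`N (k + 1) x = N s + k (N y)` lies in `S`; the summand `N s` makes this a genuine element of `S`
even when `N y = 0`.
-/

open Finset

lemma exists_rat_sum_smul_eq_of_real_sum {ι n : Type*} [Fintype n] {G : Finset ι}
    {v : ι → n → ℚ} {x : n → ℚ} {w : ι → ℝ} (h : ∀ i, (x i : ℝ) = ∑ a ∈ G, w a * v a i) :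
    ∃ c : ι → ℚ, ∑ a ∈ G, c a • v a = x := by
  classical
  rw [← Submodule.mem_span_image_finset_iff_exists_fun']
  by_contra hx
  obtain ⟨φ, hφx, hφ⟩ := Submodule.exists_dual_map_eq_bot_of_notMem hx inferInstance
  have hφv : ∀ a ∈ G, φ (v a) = 0 := fun a ha => by
    have := Submodule.mem_map_of_mem (f := φ) (Submodule.subset_span (Set.mem_image_of_mem v ha))
    rwa [hφ, Submodule.mem_bot] at this
  set f : n → ℚ := fun i => φ fun j => if i = j then 1 else 0
  have hφf : ∀ y, (φ y : ℝ) = ∑ i, (y i : ℝ) * f i := fun y => by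
    rw [LinearMap.pi_apply_eq_sum_univ φ y]
    push_cast [smul_eq_mul]
    rfl
  apply hφx
  exact_mod_cast calc (φ x : ℝ)
      = ∑ i, (∑ a ∈ G, w a * v a i) * f i := by simp_rw [hφf, h]
    _ = ∑ a ∈ G, w a * ∑ i, (v a i : ℝ) * f i := by
        simp_rw [mul_sum, sum_mul, mul_assoc]
        rw [sum_comm]
    _ = 0 := sum_eq_zero fun a ha => by rw [← hφf, hφv a ha, Rat.cast_zero, mul_zero]

lemma exists_erase_nonneg_sum_smul_eq {𝕜 E ι : Type*} [Field 𝕜] [LinearOrder 𝕜]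
    [IsStrictOrderedRing 𝕜] [AddCommGroup E] [Module 𝕜 E] [DecidableEq ι] {G : Finset ι}
    {u : ι → E} {w d : ι → 𝕜} (hw : ∀ a ∈ G, 0 ≤ w a) (hd : ∑ a ∈ G, d a • u a = 0) {b : ι}
    (hb : b ∈ G) (hdb : 0 < d b) :
    ∃ a₀ ∈ G, ∃ w' : ι → 𝕜, (∀ a ∈ G.erase a₀, 0 ≤ w' a) ∧
      ∑ a ∈ G.erase a₀, w' a • u a = ∑ a ∈ G, w a • u a := by
  obtain ⟨a₀, ha₀, hmin⟩ := (G.filter (0 < d ·)).exists_min_image (fun a => w a / d a)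
    ⟨b, mem_filter.mpr ⟨hb, hdb⟩⟩
  obtain ⟨ha₀G, hda₀⟩ := mem_filter.mp ha₀
  set θ := w a₀ / d a₀
  have hθ : 0 ≤ θ := div_nonneg (hw a₀ ha₀G) hda₀.le
  refine ⟨a₀, ha₀G, fun a => w a - θ * d a, fun a ha => ?_, ?_⟩
  · have haG := mem_of_mem_erase ha
    rw [sub_nonneg]
    rcases le_or_gt (d a) 0 with hda | hda
    · exact (mul_nonpos_of_nonneg_of_nonpos hθ hda).trans (hw a haG)
    · exact (le_div_iff₀ hda).mp (hmin a (mem_filter.mpr ⟨haG, hda⟩))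
  · rw [sum_erase _ (by simp [θ, hda₀.ne'])]
    simp only [sub_smul, mul_smul, sum_sub_distrib, ← smul_sum, hd, smul_zero, sub_zero]

lemma exists_nonneg_rat_sum_smul_eq_of_nonneg_real_sum {ι n : Type*} [Fintype n]
    [DecidableEq ι] (G : Finset ι) {v : ι → n → ℚ} {x : n → ℚ} {w : ι → ℝ}
    (hw : ∀ a ∈ G, 0 ≤ w a) (h : ∀ i, (x i : ℝ) = ∑ a ∈ G, w a * v a i) :
    ∃ G' ⊆ G, ∃ c : ι → ℚ, (∀ a ∈ G', 0 ≤ c a) ∧ ∑ a ∈ G', c a • v a = x := by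
  induction G using Finset.strongInduction generalizing w with
  | H G ih =>
  obtain ⟨c, hc⟩ := exists_rat_sum_smul_eq_of_real_sum h
  by_cases hcG : ∀ a ∈ G, 0 ≤ c a
  · exact ⟨G, subset_rfl, c, hcG, hc⟩
  push Not at hcG
  obtain ⟨b, hb, hcb⟩ := hcG
  let u : ι → n → ℝ := fun a i => v a i
  have hu : ∀ (w : ι → ℝ) (G : Finset ι) (i : n),
      (∑ a ∈ G, w a • u a) i = ∑ a ∈ G, w a * v a i := fun w G i => by
    simp [u, Finset.sum_apply]
  have hd : ∑ a ∈ G, (w a - c a) • u a = 0 := by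
    funext i
    have hcx := congrFun hc i
    simp only [Finset.sum_apply, Pi.smul_apply, smul_eq_mul] at hcx
    simp only [hu, sub_mul, sum_sub_distrib, ← h, ← hcx, Pi.zero_apply]
    push_cast
    exact sub_self _
  have hdb : 0 < w b - c b := by
    have : (c b : ℝ) < 0 := by exact_mod_cast hcb
    linarith [hw b hb]
  obtain ⟨a₀, ha₀, w', hw', hw'x⟩ := exists_erase_nonneg_sum_smul_eq hw hd hb hdb
  obtain ⟨G', hG', c', hc'⟩ := ih _ (erase_ssubset ha₀) hw' fun i => by
    rw [← hu, hw'x, hu, h]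
  exact ⟨G', hG'.trans (erase_subset _ _), c', hc'⟩

lemma Finset.exists_pos_nat_mul_eq_natCast {ι : Type*} (G : Finset ι) {c : ι → ℚ}
    (hc : ∀ a ∈ G, 0 ≤ c a) : ∃ N : ℕ, 0 < N ∧ ∃ p : ι → ℕ, ∀ a ∈ G, (N : ℚ) * c a = p a := by
  classical
  refine ⟨∏ a ∈ G, (c a).den, prod_pos fun a _ => (c a).den_pos,
    fun a => (∏ b ∈ G.erase a, (c b).den) * (c a).num.toNat, fun a ha => ?_⟩
  have hnum : ((c a).num.toNat : ℚ) = (c a).num := by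
    exact_mod_cast Int.toNat_of_nonneg (Rat.num_nonneg.mpr (hc a ha))
  rw [← mul_prod_erase G _ ha]
  push_cast
  rw [hnum, ← Rat.mul_den_eq_num]
  ring

lemma eventually_add_smul_sub_mem_of_mem_intrinsicInterior {E : Type*} [AddCommGroup E]
    [TopologicalSpace E] [IsTopologicalAddGroup E] [Module ℝ E] [ContinuousSMul ℝ E]
    {C : Set E} {x b : E} (hx : x ∈ intrinsicInterior ℝ C) (hb : b ∈ affineSpan ℝ C) :
    ∀ᶠ t in 𝓝 (0 : ℝ), x + t • (x - b) ∈ C := by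
  obtain ⟨y, hy, rfl⟩ := hx
  let f : ℝ → affineSpan ℝ C := fun t =>
    ⟨y + t • ((y : E) - b), by
      simpa [vsub_eq_sub, vadd_eq_add, add_comm] using
        AffineSubspace.smul_vsub_vadd_mem _ t y.2 hb y.2⟩
  have hf : Tendsto f (𝓝 0) (𝓝 y) := by
    simpa [f] using (show Continuous f by fun_prop).tendsto 0
  exact (hf.eventually (isOpen_interior.mem_nhds hy)).mono fun t ht =>
    interior_subset (s := ((↑) : affineSpan ℝ C → E) ⁻¹' C) ht

lemma add_mem_of_mem_addSubmonoidClosure {M : Type*} [AddMonoid M] {S : Set M}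
    (hS : ∀ x ∈ S, ∀ y ∈ S, x + y ∈ S) {s y : M} (hs : s ∈ S)
    (hy : y ∈ AddSubmonoid.closure S) : s + y ∈ S := by
  induction hy using AddSubmonoid.closure_induction generalizing s with
  | mem y hy => exact hS s hs y hy
  | zero => simpa using hs
  | add y z _ _ ihy ihz => simpa only [add_assoc] using ihz (ihy hs)

lemma nsmul_add_mem_of_mem_addSubmonoidClosure {M : Type*} [AddMonoid M] {S : Set M}
    (hS : ∀ x ∈ S, ∀ y ∈ S, x + y ∈ S) {s z : M} (hs : s ∈ S) (hz : z ∈ AddSubmonoid.closure S)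
    {N : ℕ} (hN : 0 < N) : N • s + z ∈ S := by
  obtain ⟨n, rfl⟩ := Nat.exists_eq_add_of_lt hN
  rw [zero_add, succ_nsmul', add_assoc]
  exact add_mem_of_mem_addSubmonoidClosure hS hs <|
    add_mem (nsmul_mem (AddSubmonoid.subset_closure hs) n) hz

lemma zc_injective {m : ℕ} : Function.Injective (zc (m := m)) :=
  (Int.cast_injective (α := ℝ)).comp_left

lemma zc_nsmul_add_nsmul {m : ℕ} (N k : ℕ) (a b : Fin m → ℤ) :
    zc (N • a + k • b) = (N : ℝ) • zc a + (k : ℝ) • zc b := by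
  funext i
  simp [zc]

lemma mem_coneHull_of_mem {m : ℕ} {A : Set (Fin m → ℝ)} {a : Fin m → ℝ} (ha : a ∈ A) :
    a ∈ coneHull A :=
  ⟨{a}, fun _ => 1, by simpa using ha, by simp, by simp⟩

lemma exists_finset_sum_smul_eq_of_mem_coneHull_image {α : Type*} {m : ℕ}
    {f : α → Fin m → ℝ} (hf : Function.Injective f) {S : Set α} {y : Fin m → ℝ}
    (hy : y ∈ coneHull (f '' S)) :
    ∃ G : Finset α, ↑G ⊆ S ∧ ∃ w : α → ℝ, (∀ a ∈ G, 0 ≤ w a) ∧ y = ∑ a ∈ G, w a • f a := by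
  classical
  obtain ⟨s, w, hs, hw, rfl⟩ := hy
  obtain ⟨G, hGS, rfl⟩ := Finset.subset_set_image_iff.mp hs
  exact ⟨G, hGS, w ∘ f, fun a ha => hw _ (Finset.mem_image_of_mem f ha),
    sum_image fun a _ b _ hab => hf hab⟩

lemma mem_Sstar_addSubmonoidClosure_of_mem_coneHull {m : ℕ} {S : Set (Fin m → ℤ)}
    {y : Fin m → ℝ} (hy : y ∈ coneHull (zc '' S)) (hrat : ∀ i, ∃ r : ℚ, y i = (r : ℝ)) :
    y ∈ Sstar (AddSubmonoid.closure S) := by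
  choose yq hyq using hrat
  obtain ⟨G, hGS, w, hw, rfl⟩ := exists_finset_sum_smul_eq_of_mem_coneHull_image zc_injective hy
  obtain ⟨G', hG'G, c, hc, hcy⟩ := exists_nonneg_rat_sum_smul_eq_of_nonneg_real_sum G
    (v := fun a i => (a i : ℚ)) (x := yq) hw fun i => by
      simpa [zc, Finset.sum_apply] using (hyq i).symm
  obtain ⟨N, hN, p, hp⟩ := G'.exists_pos_nat_mul_eq_natCast hc
  refine ⟨N, hN, ∑ a ∈ G', p a • a, sum_mem fun a ha =>
    nsmul_mem (AddSubmonoid.subset_closure (hGS (hG'G ha))) _, funext fun i => ?_⟩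
  have key : (N : ℚ) * yq i = ∑ a ∈ G', (p a : ℚ) * a i := by
    rw [← hcy, Finset.sum_apply, mul_sum]
    exact sum_congr rfl fun a ha => by rw [← hp a ha, Pi.smul_apply, smul_eq_mul, mul_assoc]
  simp only [Pi.smul_apply, hyq, smul_eq_mul, zc, Finset.sum_apply, nsmul_eq_mul]
  exact_mod_cast key

/-- every rational point of the asymptotic cone `O = rint(cone(S))`
belongs to `S*`. -/
theorem stmt9 {m : ℕ} (S : Set (Fin m → ℤ)) (hSne : S.Nonempty)
    (hSadd : ∀ x ∈ S, ∀ y ∈ S, x + y ∈ S) :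
    ∀ x ∈ intrinsicInterior ℝ (coneHull (zc '' S)),
      (∀ i, ∃ r : ℚ, x i = (r : ℝ)) → x ∈ Sstar S := by
  intro x hx hrat
  obtain ⟨s, hs⟩ := hSne
  have hsC : zc s ∈ coneHull (zc '' S) := mem_coneHull_of_mem (Set.mem_image_of_mem zc hs)
  obtain ⟨k, hyC, hk⟩ : ∃ k : ℕ, x + (k : ℝ)⁻¹ • (x - zc s) ∈ coneHull (zc '' S) ∧ 0 < k :=
    ((tendsto_inv_atTop_nhds_zero_nat.eventually
      (eventually_add_smul_sub_mem_of_mem_intrinsicInterior hx (subset_affineSpan ℝ _ hsC))).and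
      (eventually_gt_atTop 0)).exists
  have hyrat : ∀ i, ∃ r : ℚ, (x + (k : ℝ)⁻¹ • (x - zc s)) i = (r : ℝ) := fun i => by
    obtain ⟨r, hr⟩ := hrat i
    exact ⟨r + (k : ℚ)⁻¹ * (r - s i), by simp [hr, zc]⟩
  obtain ⟨N, hN, z, hz, hNy⟩ := mem_Sstar_addSubmonoidClosure_of_mem_coneHull hyC hyrat
  refine ⟨N * (k + 1), by positivity, N • s + k • z,
    nsmul_add_mem_of_mem_addSubmonoidClosure hSadd hs (nsmul_mem hz k) hN, ?_⟩
  rw [zc_nsmul_add_nsmul, ← hNy]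
  have hk0 : (k : ℝ) ≠ 0 := by positivity
  match_scalars <;> field_simp
  ring
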